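/- Let m ≥ 3 be an integer with m ≠ 5 and let n ≥ 2 be an integer. Let S be any finite set of integers, each at least n, such that for every finite sequence a of positive integers: if R'(a) contains no integer in {1, …, n−1} and S ⊆ R'(a), then R'(a) = T(n). Then S contains every integer g with n ≤ g ≤ 2n. -/
import Mathlib


/-- `s` is a generalized `m`-gonal number, i.e. `s = ((m-2)u^2 - (m-4)u)/2` for some `u ∈ ℤ`. -/
def IsGP (m s : ℤ) : Prop := ∃ u : ℤ, 2 * s = (m - 2) * u ^ 2 - (m - 4) * u

/-- `R'(a)`: the set of nonzero integers represented by the `m`-gonal form with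
coefficient sequence `a`, i.e. expressible as `a₁s₁ + ⋯ + aₖsₖ` with each `sᵢ ∈ GP_m`. -/
def Rset (m : ℤ) (a : List ℤ) : Set ℤ :=
  {x | x ≠ 0 ∧ ∃ s : List ℤ, s.length = a.length ∧ (∀ y ∈ s, IsGP m y) ∧
      x = (List.zipWith (· * ·) a s).sum}

lemma isGP_zero (m : ℤ) : IsGP m 0 := ⟨0, by ring⟩

lemma isGP_one (m : ℤ) : IsGP m 1 := ⟨1, by ring⟩

lemma mul_pred_nonneg (u : ℤ) : 0 ≤ u * (u - 1) := by
  rcases le_or_gt 1 u with h | h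
  · nlinarith
  · have : u ≤ 0 := by omega
    nlinarith

lemma isGP_nonneg (m s : ℤ) (hm : 3 ≤ m) (h : IsGP m s) : 0 ≤ s := by
  obtain ⟨u, hu⟩ := h
  have h1 := mul_pred_nonneg u
  rcases le_or_gt 0 u with h2 | h2 <;> nlinarith

lemma isGP_ne_two (m s : ℤ) (hm : 3 ≤ m) (hm5 : m ≠ 5) (h : IsGP m s) : s ≠ 2 := by
  rintro rfl
  obtain ⟨u, hu⟩ := h
  have h1 := mul_pred_nonneg u
  have key : u * u + u ≤ 4 := by nlinarith
  have hb1 : -3 ≤ u := by nlinarith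
  have hb2 : u ≤ 2 := by nlinarith
  interval_cases u <;> (ring_nf at hu; omega)

lemma zip_sum_nonneg (a s : List ℤ) (ha : ∀ x ∈ a, 0 ≤ x) (hs : ∀ y ∈ s, 0 ≤ y) :
    0 ≤ (List.zipWith (· * ·) a s).sum := by
  induction a generalizing s with
  | nil => simp
  | cons h t ih =>
    cases s with
    | nil => simp
    | cons y ys =>
      simp only [List.zipWith_cons_cons, List.sum_cons]
      have h1 : 0 ≤ h * y :=
        mul_nonneg (ha h (by simp)) (hs y (by simp))
      have h2 := ih ys (fun x hx => ha x (by simp [hx])) (fun x hx => hs x (by simp [hx]))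
      linarith

lemma classify (m n : ℤ) (hm : 3 ≤ m) (hm5 : m ≠ 5) (hn : 2 ≤ n)
    (a s : List ℤ) (ha : a.Nodup) (han : ∀ x ∈ a, n ≤ x) (hs : ∀ y ∈ s, IsGP m y) :
    (List.zipWith (· * ·) a s).sum = 0 ∨ (List.zipWith (· * ·) a s).sum ∈ a ∨
      2 * n + 1 ≤ (List.zipWith (· * ·) a s).sum := by
  induction a generalizing s with
  | nil => simp
  | cons h t ih =>
    cases s with
    | nil => simp
    | cons y ys =>
      have hnd : t.Nodup := ha.of_cons
      have hht : h ∉ t := by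
        have := List.nodup_cons.mp ha
        exact this.1
      have hant : ∀ x ∈ t, n ≤ x := fun x hx => han x (by simp [hx])
      have hst : ∀ z ∈ ys, IsGP m z := fun z hz => hs z (by simp [hz])
      have hyg : IsGP m y := hs y (by simp)
      have hy0 : 0 ≤ y := isGP_nonneg m y hm hyg
      have hy2 : y ≠ 2 := isGP_ne_two m y hm hm5 hyg
      have hhn : n ≤ h := han h (by simp)
      have ihres := ih ys hnd hant hst
      simp only [List.zipWith_cons_cons, List.sum_cons]
      set r := (List.zipWith (· * ·) t ys).sum with hr
      clear_value r
      rcases ihres with h0 | hmem | hbig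
      · -- r = 0
        rcases (by omega : y = 0 ∨ y = 1 ∨ 3 ≤ y) with rfl | rfl | hy3
        · left; simp [h0]
        · right; left; simp [h0]
        · right; right
          have : 3 * n ≤ h * y := by nlinarith
          linarith
      · -- r ∈ t
        have hrn : n ≤ r := hant r hmem
        have hrh : r ≠ h := fun hrh => hht (hrh ▸ hmem)
        rcases (by omega : y = 0 ∨ y = 1 ∨ 3 ≤ y) with rfl | rfl | hy3
        · right; left
          simpa using Or.inr hmem
        · right; right
          rcases lt_or_gt_of_ne hrh with hlt | hgt <;> omega
        · right; right
          have h1 : 3 * n ≤ h * y := by nlinarith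
          linarith
      · -- r ≥ 2n+1
        rcases (by omega : y = 0 ∨ y = 1 ∨ 3 ≤ y) with rfl | rfl | hy3
        · right; right; omega
        · right; right; omega
        · right; right
          have h1 : 3 * n ≤ h * y := by nlinarith
          linarith

lemma rep_zero (b : ℤ) (a : List ℤ) (hb : b ∉ a) :
    (List.zipWith (· * ·) a (a.map fun x => if x = b then (1:ℤ) else 0)).sum = 0 := by
  induction a with
  | nil => simp
  | cons h t ih =>
    have hhb : h ≠ b := fun e => hb (by simp [e])
    have hbt : b ∉ t := fun e => hb (by simp [e])
    simp only [List.map_cons, List.zipWith_cons_cons, List.sum_cons, if_neg hhb,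
      mul_zero, zero_add]
    exact ih hbt

lemma rep (b : ℤ) (a : List ℤ) (hb : b ∈ a) (ha : a.Nodup) :
    (List.zipWith (· * ·) a (a.map fun x => if x = b then (1:ℤ) else 0)).sum = b := by
  induction a with
  | nil => simp at hb
  | cons h t ih =>
    have hnd : t.Nodup := ha.of_cons
    by_cases hhb : h = b
    · subst hhb
      have hbt : h ∉ t := (List.nodup_cons.mp ha).1
      simp [rep_zero h t hbt]
    · have hbt : b ∈ t := by
        rcases List.mem_cons.mp hb with e | e
        · exact absurd e.symm hhb
        · exact e
      simp only [List.map_cons, List.zipWith_cons_cons, List.sum_cons, if_neg hhb, mul_zero,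
        zero_add]
      exact ih hbt hnd

/-- For `m ≥ 3`, `m ≠ 5` and `n ≥ 2`: any tight `T(n)`-universality criterion set `S`
(consisting of integers `≥ n`) must contain every integer `g` with `n ≤ g ≤ 2n`. -/
theorem criterion_set_contains (m : ℤ) (hm : 3 ≤ m) (hm5 : m ≠ 5)
    (n : ℤ) (hn : 2 ≤ n) (S : Finset ℤ) (hS : ∀ g ∈ S, n ≤ g)
    (hcrit : ∀ a : List ℤ, (∀ x ∈ a, 0 < x) →
      (∀ j : ℤ, 1 ≤ j → j < n → j ∉ Rset m a) → ↑S ⊆ Rset m a →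
      Rset m a = Set.Ici n) :
    ∀ g : ℤ, n ≤ g → g ≤ 2 * n → g ∈ S := by
  intro g hg hg2
  by_contra hgS
  set a := S.sort (· ≤ ·) with ha
  have hmem : ∀ x, x ∈ a ↔ x ∈ S := fun x => Finset.mem_sort _
  have hnd : a.Nodup := S.sort_nodup _
  have han : ∀ x ∈ a, n ≤ x := fun x hx => hS x ((hmem x).mp hx)
  have hpos : ∀ x ∈ a, 0 < x := fun x hx => by have := han x hx; omega
  have hsmall : ∀ j : ℤ, 1 ≤ j → j < n → j ∉ Rset m a := by
    intro j hj1 hjn hjR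
    obtain ⟨hne, s, hlen, hgp, hsum⟩ := hjR
    rcases classify m n hm hm5 hn a s hnd han hgp with h0 | hmemj | hbig
    · rw [← hsum] at h0; omega
    · have := han _ hmemj; rw [← hsum] at this; omega
    · rw [← hsum] at hbig; omega
  have hsub : ↑S ⊆ Rset m a := by
    intro b hb
    have hbS : b ∈ S := hb
    have hba : b ∈ a := (hmem b).mpr hbS
    have hbn : n ≤ b := hS b hbS
    refine ⟨by omega, a.map fun x => if x = b then (1:ℤ) else 0, by simp, ?_, ?_⟩
    · intro y hy
      obtain ⟨x, _, hxy⟩ := List.mem_map.mp hy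
      by_cases hxb : x = b
      · rw [← hxy, if_pos hxb]; exact isGP_one m
      · rw [← hxy, if_neg hxb]; exact isGP_zero m
    · exact (rep b a hba hnd).symm
  have heq := hcrit a hpos hsmall hsub
  have hgR : g ∈ Rset m a := by rw [heq]; exact hg
  obtain ⟨hne, s, hlen, hgp, hsum⟩ := hgR
  rcases classify m n hm hm5 hn a s hnd han hgp with h0 | hmemg | hbig
  · rw [← hsum] at h0; omega
  · rw [← hsum] at hmemg; exact hgS ((hmem g).mp hmemg)
  · rw [← hsum] at hbig; omega
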